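/- Mellin inversion: if f : (0,∞) → ℂ is smooth and compactly supported, and h(x) = (1/(2πi)) ∫_{Re(s)=2} f̃(s) x^{-s} ds where f̃(s) = ∫_0^∞ f(y) y^{s-1} dy, then h(x) = f(x) for all x > 0. -/

import Mathlib

open MeasureTheory Real
open scoped FourierTransform

set_option maxHeartbeats 1000000

lemma fourier_integrable_of_cs (g : ℝ → ℂ) (hg : ContDiff ℝ (⊤ : ℕ∞) g)
    (hgs : HasCompactSupport g) : Integrable (𝓕 g) := by
  have decay : ∀ k n : ℕ, ∃ C : ℝ, ∀ x : ℝ, ‖x‖ ^ k * ‖iteratedFDeriv ℝ n g x‖ ≤ C := by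
    intro k n
    obtain ⟨C, hC⟩ := (hgs.iteratedFDeriv n).exists_bound_of_continuous
      (hg.continuous_iteratedFDeriv (by exact_mod_cast le_top))
    obtain ⟨R, hR⟩ := (hgs.iteratedFDeriv (𝕜 := ℝ) n).isBounded.subset_closedBall 0
    refine ⟨(max R 0) ^ k * max C 0, fun x => ?_⟩
    by_cases hxs : x ∈ tsupport (iteratedFDeriv ℝ n g)
    · have h1 : ‖x‖ ≤ max R 0 := by
        have := hR hxs
        rw [Metric.mem_closedBall, dist_zero_right] at this
        exact this.trans (le_max_left _ _)
      exact mul_le_mul (pow_le_pow_left₀ (norm_nonneg x) h1 k)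
        ((hC x).trans (le_max_left _ _)) (norm_nonneg _) (by positivity)
    · rw [image_eq_zero_of_notMem_tsupport hxs]
      simp only [norm_zero, mul_zero]
      positivity
  let G : SchwartzMap ℝ ℂ := ⟨g, hg.of_le (by simp), decay⟩
  have : 𝓕 g = (SchwartzMap.fourierTransformCLM ℂ G : SchwartzMap ℝ ℂ) := by
    rw [SchwartzMap.fourierTransformCLM_apply]
    rfl
  rw [this]
  exact SchwartzMap.integrable _

/-- Mellin inversion: for f smooth, compactly supported in (0,∞), with Mellin transform
f̃(s) = ∫_0^∞ f(y) y^{s-1} dy, the inverse transform along Re(s)=2 recovers f. -/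
theorem stmt_2 (f : ℝ → ℂ) (hf : ContDiff ℝ (⊤ : ℕ∞) f) (hsupp : HasCompactSupport f)
    (hpos : tsupport f ⊆ Set.Ioi (0 : ℝ))
    (ftilde : ℂ → ℂ)
    (hft : ∀ s : ℂ, ftilde s = ∫ y in Set.Ioi (0 : ℝ), f y * (y : ℂ) ^ (s - 1))
    (x : ℝ) (hx : 0 < x) :
    (1 / (2 * (π : ℂ) * Complex.I)) *
      ∫ t : ℝ, ftilde ((2 : ℂ) + t * Complex.I) *
        (x : ℂ) ^ (-((2 : ℂ) + t * Complex.I)) * Complex.I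
      = f x := by
  have hfm : ∀ s : ℂ, ftilde s = mellin f s := by
    intro s
    rw [hft, mellin]
    exact (setIntegral_congr_fun measurableSet_Ioi fun t ht => by
      simp [smul_eq_mul, mul_comm]).symm
  -- Mellin convergence at 2
  have h1 : MellinConvergent f 2 := by
    have hi : Integrable (fun t : ℝ => (t : ℂ) * f t) :=
      (Complex.continuous_ofReal.mul hf.continuous).integrable_of_hasCompactSupport
        hsupp.mul_left
    refine hi.integrableOn.congr_fun (fun t ht => ?_) measurableSet_Ioi
    rw [show (2:ℂ)-1 = 1 by norm_num, Complex.cpow_one, smul_eq_mul]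
  -- Vertical integrability
  have h2 : Complex.VerticalIntegrable (mellin f) 2 := by
    set g : ℝ → ℂ := fun u => Real.exp (-2 * u) • f (Real.exp (-u)) with hg_def
    have hgsm : ContDiff ℝ (⊤ : ℕ∞) g := by
      refine ContDiff.smul (f := fun u : ℝ => Real.exp (-2 * u)) (g := fun u => f (Real.exp (-u))) ?_ ?_
      · exact Real.contDiff_exp.comp
          ((contDiff_const.mul contDiff_id : ContDiff ℝ (⊤ : ℕ∞) fun u : ℝ => (-2) * u))
      · exact hf.comp (Real.contDiff_exp.comp contDiff_neg)
    have hgcs : HasCompactSupport g := by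
      set K := tsupport f with hK
      obtain ⟨a, b, ha, hab⟩ : ∃ a b : ℝ, 0 < a ∧ K ⊆ Set.Icc a b := by
        by_cases hne : K.Nonempty
        · refine ⟨sInf K, sSup K, ?_, fun y hy => ⟨?_, ?_⟩⟩
          · exact hpos (hsupp.sInf_mem hne)
          · exact csInf_le hsupp.isBounded.bddBelow hy
          · exact le_csSup hsupp.isBounded.bddAbove hy
        · exact ⟨1, 1, one_pos, fun y hy => absurd ⟨y, hy⟩ hne⟩
      have hsub : tsupport g ⊆ (fun u : ℝ => Real.exp (-u)) ⁻¹' K := by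
        apply closure_minimal
        · intro u hu
          simp only [Set.mem_preimage]
          apply subset_tsupport
          intro h0
          apply hu
          simp [hg_def, h0]
        · exact (isClosed_tsupport f).preimage (Real.continuous_exp.comp continuous_neg)
      have hbound : (fun u : ℝ => Real.exp (-u)) ⁻¹' K ⊆
          Set.Icc (-Real.log b) (-Real.log a) := by
        intro u hu
        obtain ⟨h1u, h2u⟩ := hab hu
        constructor
        · have := Real.log_le_log (Real.exp_pos _) h2u
          rw [Real.log_exp] at this
          linarith
        · have := Real.log_le_log ha h1u
          rw [Real.log_exp] at this
          linarith
      exact isCompact_Icc.of_isClosed_subset (isClosed_tsupport g) (hsub.trans hbound)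
    have heq : ∀ y : ℝ, mellin f ((2 : ℝ) + y * Complex.I) = 𝓕 g (y / (2 * π)) := by
      intro y
      rw [mellin_eq_fourier]
      have hre : (((2:ℝ):ℂ) + (y:ℂ) * Complex.I).re = 2 := by simp
      have him : (((2:ℝ):ℂ) + (y:ℂ) * Complex.I).im = y := by simp
      rw [hre, him]
    rw [Complex.VerticalIntegrable]
    simp_rw [heq]
    exact (fourier_integrable_of_cs g hgsm hgcs).comp_div (by positivity)
  have h3 : ContinuousAt f x := hf.continuous.continuousAt
  have key := mellinInv_mellin_eq 2 f hx h1 h2 h3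
  rw [mellinInv] at key
  rw [← key]
  have hint : ∀ t : ℝ, ftilde ((2 : ℂ) + t * Complex.I) *
      (x : ℂ) ^ (-((2 : ℂ) + t * Complex.I)) * Complex.I =
      ((x : ℂ) ^ (-((2 : ℂ) + t * Complex.I)) • mellin f ((2 : ℂ) + t * Complex.I)) *
        Complex.I := by
    intro t
    rw [hfm, smul_eq_mul]
    ring
  simp_rw [hint, integral_mul_const]
  push_cast
  rw [Complex.real_smul]
  push_cast
  have hπ : (π : ℂ) ≠ 0 := Complex.ofReal_ne_zero.mpr Real.pi_ne_zero
  field_simp
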